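/- arXiv:math/0602019 — 8 statements merged into one kernel-verified Lean document; each statement's English description precedes it below -/
import Mathlib

section
/- Let X be a finite list of nonzero vectors spanning a finite-dimensional vector space V. If one selects one element from each cocircuit of X (a cocircuit being a sublist Y ⊆ X such that X − Y does not span V), then the resulting set of selected elements spans V. -/
/-- If one selects one element from each cocircuit of a finite spanning
list `X` of nonzero vectors, the selected elements span `V`. -/
theorem selection_from_cocircuits_spans
    {K V ι : Type*} [Field K] [AddCommGroup V] [Module K V]
    [FiniteDimensional K V] [Fintype ι] (X : ι → V) (hX0 : ∀ i, X i ≠ 0)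
    (hspan : Submodule.span K (Set.range X) = ⊤)
    (sel : ∀ Y : Set ι, Submodule.span K (X '' Yᶜ) ≠ ⊤ → ι)
    (hsel : ∀ Y hY, sel Y hY ∈ Y) :
    Submodule.span K (X '' {i | ∃ Y hY, sel Y hY = i}) = ⊤ := by
  set S : Set ι := {i | ∃ Y hY, sel Y hY = i}
  by_contra h
  have hY : Submodule.span K (X '' Sᶜᶜ) ≠ ⊤ := by rwa [compl_compl]
  have h1 : sel Sᶜ hY ∈ Sᶜ := hsel _ _
  exact h1 ⟨Sᶜ, hY, rfl⟩
end

section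
/- Let X be a finite list of vectors spanning V. The localization R_X = S[V][Π_{a∈X} a^{-1}] of the polynomial ring by inverting the product of the linear forms a ∈ X is spanned, as a vector space, by fractions f / Π_i b_i^{k_i+1} where f is a polynomial, {b_1,...,b_t} ⊆ X is a linearly independent sublist, and k_i ≥ 0. -/
open MvPolynomial

noncomputable def linPoly {s : ℕ} (v : Fin s → ℂ) : MvPolynomial (Fin s) ℂ :=
  ∑ j, MvPolynomial.C (v j) * MvPolynomial.X j

noncomputable def linMap (s : ℕ) : (Fin s → ℂ) →ₗ[ℂ] MvPolynomial (Fin s) ℂ where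
  toFun := linPoly
  map_add' u v := by
    simp [linPoly, add_mul, Finset.sum_add_distrib]
  map_smul' c v := by
    simp [linPoly, Finset.smul_sum, MvPolynomial.smul_eq_C_mul, mul_assoc]

lemma linPoly_ne_zero {s : ℕ} {v : Fin s → ℂ} (hv : v ≠ 0) : linPoly v ≠ 0 := by
  obtain ⟨j, hj⟩ := Function.ne_iff.mp hv
  intro h
  have : MvPolynomial.coeff (Finsupp.single j 1) (linPoly v) = v j := by
    simp [linPoly, MvPolynomial.coeff_sum, MvPolynomial.coeff_C_mul, MvPolynomial.coeff_X',
      Finsupp.single_left_inj]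
  rw [h] at this
  simp at this
  exact hj (by simpa using this.symm)

set_option linter.unusedSectionVars false
set_option maxHeartbeats 1000000
set_option synthInstance.maxHeartbeats 1000000
section Main

variable {s : ℕ} {ι : Type*} [Fintype ι] [DecidableEq ι]

/-- abbreviation for the fraction field -/
abbrev KK (s : ℕ) := FractionRing (MvPolynomial (Fin s) ℂ)

noncomputable def φ (s : ℕ) : MvPolynomial (Fin s) ℂ →ₐ[ℂ] KK s :=
  IsScalarTower.toAlgHom ℂ _ _

lemma φ_eq (s : ℕ) (f : MvPolynomial (Fin s) ℂ) :
    φ s f = algebraMap (MvPolynomial (Fin s) ℂ) (KK s) f := rfl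

/-- the generating set of fractions -/
def gens (X : ι → (Fin s → ℂ)) : Set (KK s) :=
  {x : KK s |
    ∃ (f : MvPolynomial (Fin s) ℂ) (b : Finset ι) (k : ι → ℕ),
      LinearIndependent ℂ (fun i : ↥b => X i) ∧
      x = algebraMap (MvPolynomial (Fin s) ℂ) (FractionRing (MvPolynomial (Fin s) ℂ)) f *
        ∏ i ∈ b, (algebraMap (MvPolynomial (Fin s) ℂ)
          (FractionRing (MvPolynomial (Fin s) ℂ)) (linPoly (X i)))⁻¹ ^ (k i + 1)}

noncomputable def MM (X : ι → (Fin s → ℂ)) : Submodule ℂ (KK s) :=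
  Submodule.span ℂ (gens X)

noncomputable def A (X : ι → (Fin s → ℂ)) (i : ι) : KK s := φ s (linPoly (X i))

lemma A_ne_zero (X : ι → (Fin s → ℂ)) (hX0 : ∀ i, X i ≠ 0) (i : ι) : A X i ≠ 0 := by
  have h1 : linPoly (X i) ≠ 0 := linPoly_ne_zero (hX0 i)
  simp only [A, φ_eq]
  exact fun h => h1 (IsFractionRing.injective (MvPolynomial (Fin s) ℂ) (KK s) (by simpa using h))

lemma smul_sum' {α : Type*} (S : Finset α) (r : ℂ) (f : α → KK s) :
    r • ∑ i ∈ S, f i = ∑ i ∈ S, r • f i := by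
  induction S using Finset.cons_induction with
  | empty => rw [Finset.sum_empty, Finset.sum_empty]; exact (Algebra.smul_def r (0 : KK s)).trans (mul_zero _)
  | cons a T ha ih => rw [Finset.sum_cons, Finset.sum_cons, smul_add, ih]

lemma poly_mem (X : ι → (Fin s → ℂ)) (f : MvPolynomial (Fin s) ℂ) : φ s f ∈ MM X := by
  apply Submodule.subset_span
  exact ⟨f, ∅, 0, linearIndependent_empty_type, by simp [φ_eq]⟩

lemma one_mem_MM (X : ι → (Fin s → ℂ)) : (1 : KK s) ∈ MM X := by
  simpa using poly_mem X 1

lemma mul_poly_mem (X : ι → (Fin s → ℂ)) (h : MvPolynomial (Fin s) ℂ) {x : KK s}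
    (hx : x ∈ MM X) : φ s h * x ∈ MM X := by
  induction hx using Submodule.span_induction with
  | mem y hy =>
    obtain ⟨f, b, k, hb, rfl⟩ := hy
    apply Submodule.subset_span
    exact ⟨h * f, b, k, hb, by rw [← mul_assoc, ← φ_eq, ← φ_eq, ← map_mul]⟩
  | zero => simp
  | add y z _ _ hy hz => rw [mul_add]; exact add_mem hy hz
  | smul c y _ hy => rw [mul_smul_comm]; exact Submodule.smul_mem _ _ hy

/-- The key partial fraction lemma. -/
lemma key (X : ι → (Fin s → ℂ)) (hX0 : ∀ i, X i ≠ 0) :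
    ∀ (n : ℕ) (S : Finset ι) (m : ι → ℕ), S.card ≤ n → (∀ i ∈ S, 1 ≤ m i) →
      ∏ i ∈ S, (A X i)⁻¹ ^ m i ∈ MM X := by
  intro n
  induction n with
  | zero =>
    intro S m hcard _
    have hS : S = ∅ := Finset.card_eq_zero.mp (Nat.le_zero.mp hcard)
    subst hS
    simpa using one_mem_MM X
  | succ n ih =>
    intro S m hcard hm
    by_cases hind : LinearIndependent ℂ (fun i : ↥S => X i)
    · apply Submodule.subset_span
      refine ⟨1, S, fun i => m i - 1, hind, ?_⟩
      rw [map_one, one_mul]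
      apply Finset.prod_congr rfl
      intro i hi
      congr 1
      have := hm i hi
      show m i = m i - 1 + 1
      omega
    · obtain ⟨g, hgsum, i₀', hgi₀⟩ := Fintype.not_linearIndependent_iff.mp hind
      have hi₀S : (i₀' : ι) ∈ S := i₀'.2
      set i₀ : ι := (i₀' : ι) with hi₀
      set c : ι → ℂ := fun i => if h : i ∈ S then g ⟨i, h⟩ else 0 with hc
      have hcsum : ∑ i ∈ S, c i • X i = 0 := by
        rw [← Finset.sum_attach S (fun i => c i • X i)]
        simpa [hc] using hgsum
      have hci₀ : c i₀ ≠ 0 := by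
        simpa [hc, hi₀S] using hgi₀
      -- the relation among the `A X i` in the fraction field
      set F : (Fin s → ℂ) →ₗ[ℂ] KK s := ((φ s).toLinearMap.comp (linMap s)) with hF
      have hAF : ∀ i, A X i = F (X i) := fun i => rfl
      have hFsum : ∑ i ∈ S, c i • A X i = 0 := by
        have := congrArg F hcsum
        rw [map_sum, map_zero] at this
        simpa [hAF] using this
      have hrel : A X i₀ = ∑ i ∈ S.erase i₀, (-(c i / c i₀)) • A X i := by
        have h1 : c i₀ • A X i₀ + ∑ i ∈ S.erase i₀, c i • A X i = 0 := by
          rw [Finset.add_sum_erase S (fun i => c i • A X i) hi₀S]; exact hFsum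
        have h2 : ∑ i ∈ S.erase i₀, c i • A X i = -(c i₀ • A X i₀) :=
          eq_neg_of_add_eq_zero_right h1
        have h3 : ∑ i ∈ S.erase i₀, (-(c i / c i₀)) • A X i
            = (-(c i₀)⁻¹) • ∑ i ∈ S.erase i₀, c i • A X i := by
          rw [smul_sum']
          refine Finset.sum_congr rfl fun i _ => ?_
          rw [smul_smul]
          congr 1
          field_simp
        rw [h3, h2, smul_neg, neg_smul, neg_neg, smul_smul, inv_mul_cancel₀ hci₀, one_smul]
      -- inner induction on the total exponent away from i₀
      have inner : ∀ (N : ℕ) (m' : ι → ℕ), (∑ i ∈ S.erase i₀, m' i) ≤ N →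
          ∏ i ∈ S, (A X i)⁻¹ ^ m' i ∈ MM X := by
        intro N
        induction N with
        | zero =>
          intro m' hsum
          by_cases hz : ∃ i ∈ S, m' i = 0
          · -- support shrinks, use outer induction hypothesis
            obtain ⟨i₁, hi₁S, hi₁⟩ := hz
            set T := S.filter (fun i => m' i ≠ 0) with hT
            have hprod : ∏ i ∈ S, (A X i)⁻¹ ^ m' i = ∏ i ∈ T, (A X i)⁻¹ ^ m' i := by
              rw [hT, Finset.prod_filter]
              apply Finset.prod_congr rfl
              intro i _
              by_cases h : m' i = 0 <;> simp [h]
            rw [hprod]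
            apply ih T m'
            · have hTlt : T.card < S.card := by
                apply Finset.card_lt_card
                rw [Finset.ssubset_iff_of_subset (Finset.filter_subset _ _)]
                exact ⟨i₁, hi₁S, by simp [hT, hi₁]⟩
              omega
            · intro i hi
              have := (Finset.mem_filter.mp hi).2
              omega
          · exfalso
            push_neg at hz
            have herase : S.erase i₀ = ∅ := by
              by_contra hne
              obtain ⟨i, hi⟩ := Finset.nonempty_iff_ne_empty.mpr hne
              have h1 : 1 ≤ m' i := by
                have := hz i (Finset.mem_of_mem_erase hi); omega
              have h2 : m' i ≤ ∑ j ∈ S.erase i₀, m' j := Finset.single_le_sum (fun j _ => Nat.zero_le _) hi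
              omega
            have : A X i₀ = 0 := by rw [hrel, herase, Finset.sum_empty]
            exact A_ne_zero X hX0 i₀ this
        | succ N ihN =>
          intro m' hsum
          by_cases hz : ∃ i ∈ S, m' i = 0
          · -- same support-shrinking argument
            obtain ⟨i₁, hi₁S, hi₁⟩ := hz
            set T := S.filter (fun i => m' i ≠ 0) with hT
            have hprod : ∏ i ∈ S, (A X i)⁻¹ ^ m' i = ∏ i ∈ T, (A X i)⁻¹ ^ m' i := by
              rw [hT, Finset.prod_filter]
              apply Finset.prod_congr rfl
              intro i _
              by_cases h : m' i = 0 <;> simp [h]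
            rw [hprod]
            apply ih T m'
            · have hTlt : T.card < S.card := by
                apply Finset.card_lt_card
                rw [Finset.ssubset_iff_of_subset (Finset.filter_subset _ _)]
                exact ⟨i₁, hi₁S, by simp [hT, hi₁]⟩
              omega
            · intro i hi
              have := (Finset.mem_filter.mp hi).2
              omega
          · push_neg at hz
            -- all exponents positive on S; do the rewriting step
            have hpos : ∀ i ∈ S, 1 ≤ m' i := fun i hi => by have := hz i hi; omega
            -- the new exponent functions
            set mi : ι → ι → ℕ := fun i j => if j = i then m' i - 1 else if j = i₀ then m' i₀ + 1 else m' j with hmi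
            have hQ : ∀ i ∈ S.erase i₀,
                A X i * ((A X i₀)⁻¹ * ∏ j ∈ S, (A X j)⁻¹ ^ m' j) = ∏ j ∈ S, (A X j)⁻¹ ^ mi i j := by
              intro i hi
              have hiS : i ∈ S := Finset.mem_of_mem_erase hi
              have hii₀ : i ≠ i₀ := Finset.ne_of_mem_erase hi
              rw [← Finset.mul_prod_erase S _ hi₀S, ← Finset.mul_prod_erase (S.erase i₀) _ hi,
                  ← Finset.mul_prod_erase S (fun j => (A X j)⁻¹ ^ mi i j) hi₀S,
                  ← Finset.mul_prod_erase (S.erase i₀) (fun j => (A X j)⁻¹ ^ mi i j) hi]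
              have hrest : ∏ j ∈ (S.erase i₀).erase i, (A X j)⁻¹ ^ mi i j
                  = ∏ j ∈ (S.erase i₀).erase i, (A X j)⁻¹ ^ m' j :=
                Finset.prod_congr rfl fun j hj => by
                  have hji : j ≠ i := Finset.ne_of_mem_erase hj
                  have hji₀ : j ≠ i₀ := Finset.ne_of_mem_erase (Finset.mem_of_mem_erase hj)
                  simp [hmi, hji, hji₀]
              rw [hrest]
              have hmii : mi i i = m' i - 1 := by simp [hmi]
              have hmii₀ : mi i i₀ = m' i₀ + 1 := by simp [hmi, Ne.symm hii₀]
              rw [hmii, hmii₀]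
              have hpow : (A X i)⁻¹ ^ m' i = (A X i)⁻¹ ^ (m' i - 1) * (A X i)⁻¹ := by
                rw [← pow_succ]
                congr 1
                have := hpos i hiS
                omega
              rw [hpow, pow_succ]
              set R := ∏ j ∈ (S.erase i₀).erase i, (A X j)⁻¹ ^ m' j with hR
              have h1 : A X i * (A X i)⁻¹ = 1 := mul_inv_cancel₀ (A_ne_zero X hX0 i)
              have h2 : A X i * ((A X i₀)⁻¹ * ((A X i₀)⁻¹ ^ m' i₀ * ((A X i)⁻¹ ^ (m' i - 1) * (A X i)⁻¹ * R)))
                  = (A X i * (A X i)⁻¹) * ((A X i₀)⁻¹ ^ m' i₀ * (A X i₀)⁻¹ * ((A X i)⁻¹ ^ (m' i - 1) * R)) := by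
                ring
              rw [h2, h1, one_mul]
            have hne : A X i₀ ≠ 0 := A_ne_zero X hX0 i₀
            have hstep : ∏ j ∈ S, (A X j)⁻¹ ^ m' j
                = ∑ i ∈ S.erase i₀, (-(c i / c i₀)) • ∏ j ∈ S, (A X j)⁻¹ ^ mi i j :=
              calc ∏ j ∈ S, (A X j)⁻¹ ^ m' j
                  = A X i₀ * ((A X i₀)⁻¹ * ∏ j ∈ S, (A X j)⁻¹ ^ m' j) := by
                    rw [← mul_assoc, mul_inv_cancel₀ hne, one_mul]
                _ = (∑ i ∈ S.erase i₀, (-(c i / c i₀)) • A X i)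
                      * ((A X i₀)⁻¹ * ∏ j ∈ S, (A X j)⁻¹ ^ m' j) := by rw [← hrel]
                _ = ∑ i ∈ S.erase i₀, (-(c i / c i₀))
                      • (A X i * ((A X i₀)⁻¹ * ∏ j ∈ S, (A X j)⁻¹ ^ m' j)) := by
                    rw [Finset.sum_mul]
                    exact Finset.sum_congr rfl fun i _ => smul_mul_assoc _ _ _
                _ = ∑ i ∈ S.erase i₀, (-(c i / c i₀)) • ∏ j ∈ S, (A X j)⁻¹ ^ mi i j :=
                    Finset.sum_congr rfl fun i hi => by rw [hQ i hi]
            rw [hstep]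
            apply Submodule.sum_mem
            intro i hi
            apply Submodule.smul_mem
            apply ihN
            -- sum bound
            have hiS : i ∈ S := Finset.mem_of_mem_erase hi
            have hii₀ : i ≠ i₀ := Finset.ne_of_mem_erase hi
            have hsplit1 : mi i i + ∑ j ∈ (S.erase i₀).erase i, mi i j = ∑ j ∈ S.erase i₀, mi i j :=
              Finset.add_sum_erase _ (mi i) hi
            have hsplit2 : m' i + ∑ j ∈ (S.erase i₀).erase i, m' j = ∑ j ∈ S.erase i₀, m' j :=
              Finset.add_sum_erase _ m' hi
            have hrest : ∑ j ∈ (S.erase i₀).erase i, mi i j = ∑ j ∈ (S.erase i₀).erase i, m' j := by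
              apply Finset.sum_congr rfl
              intro j hj
              have hji : j ≠ i := Finset.ne_of_mem_erase hj
              have hji₀ : j ≠ i₀ := Finset.ne_of_mem_erase (Finset.mem_of_mem_erase hj)
              simp [hmi, hji, hji₀]
            have hme : mi i i = m' i - 1 := by simp [hmi]
            have h1i : 1 ≤ m' i := hpos i hiS
            omega
      exact inner (∑ i ∈ S.erase i₀, m i) m le_rfl

lemma A_eq (X : ι → (Fin s → ℂ)) (i : ι) :
    A X i = algebraMap (MvPolynomial (Fin s) ℂ) (FractionRing (MvPolynomial (Fin s) ℂ))
      (linPoly (X i)) := rfl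

lemma gen_mul_gen (X : ι → (Fin s → ℂ)) (hX0 : ∀ i, X i ≠ 0) {x y : KK s}
    (hx : x ∈ gens X) (hy : y ∈ gens X) : x * y ∈ MM X := by
  obtain ⟨f, b, k, hb, rfl⟩ := hx
  obtain ⟨g, b', k', hb', rfl⟩ := hy
  set e : ι → ℕ := fun i => (if i ∈ b then k i + 1 else 0) + (if i ∈ b' then k' i + 1 else 0)
    with he
  have h1 : ∏ i ∈ b, (A X i)⁻¹ ^ (k i + 1)
      = ∏ i ∈ b ∪ b', (A X i)⁻¹ ^ (if i ∈ b then k i + 1 else 0) :=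
    (Finset.prod_congr rfl fun i hi => by rw [if_pos hi]).trans
      (Finset.prod_subset Finset.subset_union_left fun i _ hib => by rw [if_neg hib, pow_zero])
  have h2 : ∏ i ∈ b', (A X i)⁻¹ ^ (k' i + 1)
      = ∏ i ∈ b ∪ b', (A X i)⁻¹ ^ (if i ∈ b' then k' i + 1 else 0) :=
    (Finset.prod_congr rfl fun i hi => by rw [if_pos hi]).trans
      (Finset.prod_subset Finset.subset_union_right fun i _ hib => by rw [if_neg hib, pow_zero])
  have h3 : (∏ i ∈ b, (A X i)⁻¹ ^ (k i + 1)) * (∏ i ∈ b', (A X i)⁻¹ ^ (k' i + 1))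
      = ∏ i ∈ b ∪ b', (A X i)⁻¹ ^ e i := by
    rw [h1, h2, ← Finset.prod_mul_distrib]
    exact Finset.prod_congr rfl fun i _ => by rw [← pow_add]
  have h4 : ∏ i ∈ b ∪ b', (A X i)⁻¹ ^ e i ∈ MM X := by
    apply key X hX0 (b ∪ b').card (b ∪ b') e le_rfl
    intro i hi
    rcases Finset.mem_union.mp hi with h | h <;> simp [he, h] <;> omega
  have h5 := mul_poly_mem X (f * g) h4
  have h6 : (algebraMap (MvPolynomial (Fin s) ℂ) (FractionRing (MvPolynomial (Fin s) ℂ)) f *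
        ∏ i ∈ b, (algebraMap (MvPolynomial (Fin s) ℂ)
          (FractionRing (MvPolynomial (Fin s) ℂ)) (linPoly (X i)))⁻¹ ^ (k i + 1)) *
      (algebraMap (MvPolynomial (Fin s) ℂ) (FractionRing (MvPolynomial (Fin s) ℂ)) g *
        ∏ i ∈ b', (algebraMap (MvPolynomial (Fin s) ℂ)
          (FractionRing (MvPolynomial (Fin s) ℂ)) (linPoly (X i)))⁻¹ ^ (k' i + 1))
      = φ s (f * g) * ∏ i ∈ b ∪ b', (A X i)⁻¹ ^ e i := by
    rw [← h3, φ_eq, map_mul]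
    simp only [← A_eq]
    ring
  rw [h6]
  exact h5

lemma mul_mem_MM (X : ι → (Fin s → ℂ)) (hX0 : ∀ i, X i ≠ 0) {x y : KK s}
    (hx : x ∈ MM X) (hy : y ∈ MM X) : x * y ∈ MM X := by
  induction hx using Submodule.span_induction with
  | mem x hxg =>
    induction hy using Submodule.span_induction with
    | mem y hyg => exact gen_mul_gen X hX0 hxg hyg
    | zero => rw [mul_zero]; exact Submodule.zero_mem _
    | add a b _ _ iha ihb => rw [mul_add]; exact Submodule.add_mem _ iha ihb
    | smul r a _ iha => rw [mul_smul_comm]; exact Submodule.smul_mem _ _ iha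
  | zero => rw [zero_mul]; exact Submodule.zero_mem _
  | add a b _ _ iha ihb => rw [add_mul]; exact Submodule.add_mem _ iha ihb
  | smul r a _ iha => rw [smul_mul_assoc]; exact Submodule.smul_mem _ _ iha

lemma inv_mem_MM (X : ι → (Fin s → ℂ)) (hX0 : ∀ i, X i ≠ 0) (i : ι) :
    (algebraMap (MvPolynomial (Fin s) ℂ) (FractionRing (MvPolynomial (Fin s) ℂ))
      (linPoly (X i)))⁻¹ ∈ MM X := by
  have := key X hX0 1 {i} 1 (by simp) (by simp)
  simpa [A_eq] using this

end Main

/-- the localization `R_X = S[V][Π_{a∈X} a⁻¹]` is spanned, as a vector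
space, by the fractions `f / Π_i b_i^{k_i+1}` with `{b_1,...,b_t} ⊆ X` linearly
independent. -/
theorem localization_spanned_by_independent_fractions
    {s : ℕ} {ι : Type*} [Fintype ι] (X : ι → (Fin s → ℂ))
    (hX0 : ∀ i, X i ≠ 0) (hspan : Submodule.span ℂ (Set.range X) = ⊤) :
    Submodule.span ℂ
      {x : FractionRing (MvPolynomial (Fin s) ℂ) |
        ∃ (f : MvPolynomial (Fin s) ℂ) (b : Finset ι) (k : ι → ℕ),
          LinearIndependent ℂ (fun i : ↥b => X i) ∧
          x = algebraMap (MvPolynomial (Fin s) ℂ) (FractionRing (MvPolynomial (Fin s) ℂ)) f *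
            ∏ i ∈ b, (algebraMap (MvPolynomial (Fin s) ℂ)
              (FractionRing (MvPolynomial (Fin s) ℂ)) (linPoly (X i)))⁻¹ ^ (k i + 1)} =
    Subalgebra.toSubmodule (Algebra.adjoin ℂ
      (Set.range (algebraMap (MvPolynomial (Fin s) ℂ) (FractionRing (MvPolynomial (Fin s) ℂ))) ∪
       {x | ∃ i : ι, x = (algebraMap (MvPolynomial (Fin s) ℂ)
          (FractionRing (MvPolynomial (Fin s) ℂ)) (linPoly (X i)))⁻¹})) := by
  classical
  apply le_antisymm
  · rw [Submodule.span_le]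
    intro x hx
    rw [SetLike.mem_coe, Subalgebra.mem_toSubmodule]
    obtain ⟨f, b, k, hb, rfl⟩ := hx
    refine Subalgebra.mul_mem _ ?_ ?_
    · exact Algebra.subset_adjoin (Set.mem_union_left _ (Set.mem_range_self f))
    · refine Subalgebra.prod_mem _ fun i _ => Subalgebra.pow_mem _ (Algebra.subset_adjoin ?_) _
      exact Set.mem_union_right _ ⟨i, rfl⟩
  · have hT : Algebra.adjoin ℂ
        (Set.range (algebraMap (MvPolynomial (Fin s) ℂ)
            (FractionRing (MvPolynomial (Fin s) ℂ))) ∪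
         {x | ∃ i : ι, x = (algebraMap (MvPolynomial (Fin s) ℂ)
            (FractionRing (MvPolynomial (Fin s) ℂ)) (linPoly (X i)))⁻¹})
        ≤ (MM X).toSubalgebra (one_mem_MM X) (fun _ _ hx hy => mul_mem_MM X hX0 hx hy) := by
      apply Algebra.adjoin_le
      rintro x (⟨f, rfl⟩ | ⟨i, rfl⟩)
      · exact poly_mem X f
      · exact inv_mem_MM X hX0 i
    intro x hx
    exact hT hx
end

section
/- Let X be a finite list of vectors in a lattice Λ, spanning V = Λ ⊗ ℝ. Then δ(X) := Σ_{b ∈ B(X)} |det(b)| equals Σ_{e^φ ∈ P(X)} d(X_φ), where P(X) is the union over bases b ⊆ X of the finite subgroups T(b) ⊆ T = Hom(Λ, ℂ*) of characters trivial on the sublattice generated by b, X_φ = {a ∈ X : e^{⟨φ|a⟩} = 1}, and d(X_φ) is the number of bases extractable from X_φ. -/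
/-!
Both sides count the pairs `(b, χ)` with `b` a basis extracted from `X` and `χ` a character
trivial on `Λ_b`. For a fixed `b`, these `χ` are the characters of `Λ / Λ_b`, a finite group
because `b` has full rank, so there are `[Λ : Λ_b] = |det b|` of them.
-/

open scoped Classical

/-- Real realization of an integral vector list. -/
def XRe {s : ℕ} {ι : Type*} (X : ι → (Fin s → ℤ)) (i : ι) : Fin s → ℝ :=
  fun j => (X i j : ℝ)

/-- `b` is a basis (of `V = Λ ⊗ ℝ`) extracted from `X`. -/
def IsBasisOf {s : ℕ} {ι : Type*} (X : ι → (Fin s → ℤ)) (b : Finset ι) : Prop :=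
  LinearIndependent ℝ (fun i : ↥b => XRe X i) ∧ Submodule.span ℝ (XRe X '' ↑b) = ⊤

/-- `|det(b)| = [Λ : Λ_b]`, the index of the sublattice generated by `b`. -/
noncomputable def detIndex {s : ℕ} {ι : Type*} (X : ι → (Fin s → ℤ)) (b : Finset ι) : ℕ :=
  Nat.card ((Fin s → ℤ) ⧸ Submodule.span ℤ (X '' ↑b))

namespace AddChar

lemma forall_mem_closure_eq_one_iff {A M : Type*} [AddGroup A] [Monoid M] (ψ : AddChar A M)
    (S : Set A) : (∀ x ∈ AddSubgroup.closure S, ψ x = 1) ↔ ∀ x ∈ S, ψ x = 1 := by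
  simpa [SetLike.le_def, Set.subset_def] using
    AddSubgroup.closure_le (k := S) ψ.toAddMonoidHom.ker

variable {A M : Type*} [AddCommGroup A] [CommMonoid M]

def quotientEquiv (N : AddSubgroup A) :
    AddChar (A ⧸ N) M ≃ {ψ : AddChar A M // ∀ x ∈ N, ψ x = 1} where
  toFun φ := ⟨φ.compAddMonoidHom (QuotientAddGroup.mk' N), fun x hx => by
    simp [(QuotientAddGroup.eq_zero_iff x).2 hx]⟩
  invFun ψ := toAddMonoidHomEquiv.symm <| QuotientAddGroup.lift N ψ.1.toAddMonoidHom fun x hx => by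
    simp [ψ.2 x hx]
  left_inv φ := by
    ext q
    induction q using QuotientAddGroup.induction_on
    rfl
  right_inv ψ := rfl

lemma natCard_forall_mem_eq_one_eq_index (N : AddSubgroup A) [N.FiniteIndex] :
    Nat.card {ψ : AddChar A ℂ // ∀ x ∈ N, ψ x = 1} = N.index := by
  have := Fintype.ofFinite (A ⧸ N)
  rw [← Nat.card_congr (quotientEquiv N), Nat.card_eq_fintype_card, card_eq,
    AddSubgroup.index, Nat.card_eq_fintype_card]

end AddChar

open Finset in
lemma sum_natCard_eq_finsum_natCard {α β : Type*} [Fintype α] (p : α → Prop) (r : α → β → Prop)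
    (hr : ∀ a, p a → Finite {y // r a y}) :
    ∑ a ∈ univ.filter p, Nat.card {y // r a y} =
      ∑ᶠ y ∈ {y | ∃ a, p a ∧ r a y}, Nat.card {a // p a ∧ r a y} := by
  have hT : {y | ∃ a, p a ∧ r a y}.Finite :=
    (Set.toFinite {a | p a}).biUnion (fun a ha => Set.finite_coe_iff.1 (hr a ha)) |>.subset
      fun y ⟨a, ha, h⟩ => Set.mem_biUnion ha h
  have above : ∀ a ∈ univ.filter p, Nat.card {y // r a y} = #(hT.toFinset.bipartiteAbove r a) := by
    intro a ha
    have := hr a (mem_filter.1 ha).2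
    rw [← Set.coe_ofPred, Nat.card_coe_set_eq,
      Set.ncard_eq_toFinset_card {y | r a y} (Set.finite_coe_iff.1 this)]
    congr 1
    ext y
    simp only [Set.Finite.mem_toFinset, Set.mem_ofPred_eq, bipartiteAbove, mem_filter]
    exact ⟨fun h => ⟨⟨a, (mem_filter.1 ha).2, h⟩, h⟩, And.right⟩
  have below : ∀ y, Nat.card {a // p a ∧ r a y} = #((univ.filter p).bipartiteBelow r y) := by
    intro y
    rw [Nat.card_eq_fintype_card, Fintype.card_subtype, bipartiteBelow, filter_filter]
  rw [finsum_mem_eq_finite_toFinset_sum _ hT, sum_congr rfl above,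
    sum_congr rfl fun y _ => below y, sum_card_bipartiteAbove_eq_sum_card_bipartiteBelow]

lemma linearIndependent_int_of_real {κ : Type*} {s : ℕ} (v : κ → Fin s → ℤ)
    (hv : LinearIndependent ℝ fun k j => (v k j : ℝ)) : LinearIndependent ℤ v :=
  (hv.restrict_scalars' ℤ).of_comp ((Int.castAddHom ℝ).toIntLinearMap.compLeft (Fin s))

lemma detIndex_eq_index {s : ℕ} {ι : Type*} (X : ι → (Fin s → ℤ)) (b : Finset ι) :
    detIndex X b = (AddSubgroup.closure (X '' b)).index := by
  rw [← Submodule.span_int_eq_addSubgroupClosure]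
  rfl

namespace IsBasisOf

variable {s : ℕ} {ι : Type*} {X : ι → (Fin s → ℤ)} {b : Finset ι}

lemma card_eq (hb : IsBasisOf X b) : Fintype.card b = s := by
  rw [← finrank_span_eq_card hb.1, Set.range_comp', Subtype.range_coe_subtype,
    Finset.setOfPred_mem, hb.2, finrank_top, Module.finrank_fin_fun]

lemma finiteIndex (hb : IsBasisOf X b) : (AddSubgroup.closure (X '' b)).FiniteIndex := by
  have hli : LinearIndependent ℤ fun i : b => X i := linearIndependent_int_of_real _ hb.1
  have hrank : Module.finrank ℤ (Submodule.span ℤ (X '' b)) = Module.finrank ℤ (Fin s → ℤ) := by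
    rw [← Finset.setOfPred_mem, ← Subtype.range_coe_subtype, ← Set.range_comp',
      finrank_span_eq_card hli, hb.card_eq, Module.finrank_fin_fun]
  have : Finite ((Fin s → ℤ) ⧸ (Submodule.span ℤ (X '' b)).toAddSubgroup) :=
    Submodule.finiteQuotientOfFreeOfRankEq _ hrank
  rw [← Submodule.span_int_eq_addSubgroupClosure]
  exact AddSubgroup.finiteIndex_of_finite_quotient

lemma natCard_addChar_eq_detIndex (hb : IsBasisOf X b) :
    Nat.card {χ : AddChar (Fin s → ℤ) ℂ // ∀ i ∈ b, χ (X i) = 1} = detIndex X b := by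
  have := hb.finiteIndex
  simp_rw [detIndex_eq_index, ← AddChar.natCard_forall_mem_eq_one_eq_index,
    AddChar.forall_mem_closure_eq_one_iff, Set.forall_mem_image, Finset.mem_coe]

end IsBasisOf

theorem delta_eq_sum_over_points_general
    {s : ℕ} {ι : Type*} [Fintype ι] (X : ι → (Fin s → ℤ)) :
    (∑ b ∈ Finset.univ.powerset.filter (IsBasisOf X), detIndex X b) =
      ∑ᶠ χ ∈ {χ : AddChar (Fin s → ℤ) ℂ |
          ∃ b : Finset ι, IsBasisOf X b ∧ ∀ i ∈ b, χ (X i) = 1},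
        Nat.card {b : Finset ι // IsBasisOf X b ∧ ∀ i ∈ b, χ (X i) = 1} := by
  have hfin (b : Finset ι) (hb : IsBasisOf X b) :
      Finite {χ : AddChar (Fin s → ℤ) ℂ // ∀ i ∈ b, χ (X i) = 1} := by
    refine Nat.finite_of_card_ne_zero ?_
    rw [hb.natCard_addChar_eq_detIndex, detIndex_eq_index]
    exact hb.finiteIndex.index_ne_zero
  rw [Finset.powerset_univ, ← sum_natCard_eq_finsum_natCard _ _ hfin]
  exact Finset.sum_congr rfl fun b hb => (Finset.mem_filter.1 hb).2.natCard_addChar_eq_detIndex.symm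

/-- `δ(X) = Σ_{b∈B(X)} |det b| = Σ_{e^φ ∈ P(X)} d(X_φ)`, the sum over the
points of the toric arrangement of the number of bases extractable from `X_φ`. -/
theorem delta_eq_sum_over_points
    {s : ℕ} {ι : Type*} [Fintype ι] (X : ι → (Fin s → ℤ))
    (hX0 : ∀ i, X i ≠ 0)
    (hspan : Submodule.span ℝ (Set.range (XRe X)) = ⊤) :
    (∑ b ∈ Finset.univ.powerset.filter (IsBasisOf X), detIndex X b) =
      ∑ᶠ χ ∈ {χ : AddChar (Fin s → ℤ) ℂ |
          ∃ b : Finset ι, IsBasisOf X b ∧ ∀ i ∈ b, χ (X i) = 1},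
        Nat.card {b : Finset ι // IsBasisOf X b ∧ ∀ i ∈ b, χ (X i) = 1} :=
  delta_eq_sum_over_points_general X
end

section
/- The set of points of T = Hom(Λ, ℂ*) where all generators N_Y = Π_{a∈Y}(1 − e^{−a}) (Y a cocircuit of X) vanish equals P(X) = ∪_{b∈B(X)} T(b), the union over bases b extracted from X of the finite subgroups of characters trivial on the sublattice generated by b. -/
/-!
`N_Y` vanishes at `χ` iff `χ` is trivial on some `a ∈ Y`, so `χ` is a common zero iff the set
`S = {a : χ a = 1}` meets every cocircuit. A set meets every cocircuit iff its complement contains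
no cocircuit, i.e. iff it spans, i.e. iff it contains a basis extracted from `X`.
-/

open scoped Classical

theorem AddChar.one_sub_map_neg_eq_zero_iff {A R : Type*} [AddGroup A] [DivisionRing R]
    (ψ : AddChar A R) (a : A) : 1 - ψ (-a) = 0 ↔ ψ a = 1 := by
  rw [sub_eq_zero, map_neg_eq_inv, eq_comm, inv_eq_one]

section Cocircuits

variable {K V ι : Type*} [Field K] [AddCommGroup V] [Module K V] {v : ι → V}

theorem Finset.exists_subset_linearIndependent_span_eq_top {S : Finset ι}
    (hS : Submodule.span K (v '' S) = ⊤) :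
    ∃ b ⊆ S, LinearIndependent K (fun i : ↥b => v i) ∧ Submodule.span K (v '' b) = ⊤ := by
  obtain ⟨b, hbS, -, hSb, hb⟩ :=
    exists_linearIndepOn_extension (linearIndepOn_empty K v) (Set.empty_subset (S : Set ι))
  lift b to Finset ι using S.finite_toSet.subset hbS
  refine ⟨b, Finset.coe_subset.mp hbS, hb, eq_top_iff.mpr ?_⟩
  rw [← hS]
  exact Submodule.span_le.mpr hSb

variable [Fintype ι]

theorem exists_mem_inter_of_span_eq_top_of_span_sdiff_ne_top {b Y : Finset ι}
    (hb : Submodule.span K (v '' b) = ⊤)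
    (hY : Submodule.span K (v '' ↑(Finset.univ \ Y)) ≠ ⊤) : ∃ i ∈ Y, i ∈ b := by
  by_contra! hbY
  refine hY (eq_top_iff.mpr (hb ▸ Submodule.span_mono (Set.image_mono ?_)))
  intro i hi
  simpa using fun hiY => hbY i hiY hi

theorem forall_cocircuit_exists_mem_iff_exists_basis (p : ι → Prop) :
    (∀ Y : Finset ι, Submodule.span K (v '' ↑(Finset.univ \ Y)) ≠ ⊤ → ∃ i ∈ Y, p i) ↔
      ∃ b : Finset ι, (LinearIndependent K (fun i : ↥b => v i) ∧
        Submodule.span K (v '' b) = ⊤) ∧ ∀ i ∈ b, p i := by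
  constructor
  · intro h
    set S := Finset.univ.filter p
    have hS : Submodule.span K (v '' S) = ⊤ := by
      by_contra hS
      obtain ⟨i, hiS, hi⟩ := h (Finset.univ \ S) (by rwa [Finset.sdiff_sdiff_eq_self S.subset_univ])
      exact (Finset.mem_sdiff.mp hiS).2 (Finset.mem_filter.mpr ⟨Finset.mem_univ i, hi⟩)
    obtain ⟨b, hbS, hb⟩ := Finset.exists_subset_linearIndependent_span_eq_top hS
    exact ⟨b, hb, fun i hi => (Finset.mem_filter.mp (hbS hi)).2⟩
  · rintro ⟨b, ⟨-, hb⟩, hp⟩ Y hY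
    obtain ⟨i, hiY, hib⟩ := exists_mem_inter_of_span_eq_top_of_span_sdiff_ne_top hb hY
    exact ⟨i, hiY, hp i hib⟩

end Cocircuits

theorem zero_set_of_NY_eq_points_of_arrangement_general
    {s : ℕ} {ι : Type*} [Fintype ι] (X : ι → (Fin s → ℤ)) :
    {χ : AddChar (Fin s → ℤ) ℂ | ∀ Y : Finset ι,
        Submodule.span ℝ (XRe X '' ↑(Finset.univ \ Y)) ≠ ⊤ →
        ∏ i ∈ Y, (1 - χ (-(X i))) = 0} =
      ⋃ b ∈ {b : Finset ι | IsBasisOf X b},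
        {χ : AddChar (Fin s → ℤ) ℂ | ∀ i ∈ b, χ (X i) = 1} := by
  ext χ
  simp only [Set.mem_ofPred_eq, Set.mem_iUnion, exists_prop, Finset.prod_eq_zero_iff,
    AddChar.one_sub_map_neg_eq_zero_iff]
  exact forall_cocircuit_exists_mem_iff_exists_basis fun i => χ (X i) = 1

/-- the common zero set in `T = Hom(Λ, ℂ*)` of the generators
`N_Y = Π_{a∈Y}(1 − e^{−a})` (over all cocircuits `Y`) is
`P(X) = ∪_{b ∈ B(X)} T(b)`. -/
theorem zero_set_of_NY_eq_points_of_arrangement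
    {s : ℕ} {ι : Type*} [Fintype ι] (X : ι → (Fin s → ℤ))
    (hX0 : ∀ i, X i ≠ 0)
    (hspan : Submodule.span ℝ (Set.range (XRe X)) = ⊤) :
    {χ : AddChar (Fin s → ℤ) ℂ | ∀ Y : Finset ι,
        Submodule.span ℝ (XRe X '' ↑(Finset.univ \ Y)) ≠ ⊤ →
        ∏ i ∈ Y, (1 - χ (-(X i))) = 0} =
      ⋃ b ∈ {b : Finset ι | IsBasisOf X b},
        {χ : AddChar (Fin s → ℤ) ℂ | ∀ i ∈ b, χ (X i) = 1} :=
  zero_set_of_NY_eq_points_of_arrangement_general X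
end

section
/- If a point v = Σ_{a∈X} v_a a with 0 ≤ v_a ≤ 1 lies on the boundary of the zonotope B(X) = {Σ_{a∈X} t_a a : 0 ≤ t_a ≤ 1}, then the set A = {a ∈ X : 0 < v_a < 1} does not span V. -/
/-!
Let `A` be the set of indices with `0 < v i < 1`. Freezing the coefficients outside `A` and letting
those in `A` range over the open cube `(0, 1)^A` sweeps out a subset of the zonotope that is a
translate of the image of an open set under `u ↦ ∑_{i ∈ A} u i • X i`. If the `X i`, `i ∈ A`, span,
this linear map is surjective, hence open, so `v` has a neighbourhood inside the zonotope.
-/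

open Set

def zonotope {ι V : Type*} [Fintype ι] [AddCommGroup V] [Module ℝ V] (X : ι → V) : Set V :=
  {x | ∃ t : ι → ℝ, (∀ i, t i ∈ Icc (0 : ℝ) 1) ∧ x = ∑ i, t i • X i}

section

variable {ι V : Type*} [Fintype ι] [AddCommGroup V] [Module ℝ V]

theorem sum_dite_smul_eq_add_linearCombination {A : Set ι} [DecidablePred (· ∈ A)]
    (X : ι → V) (u : A → ℝ) (w : ι → ℝ) :
    ∑ i, (if h : i ∈ A then u ⟨i, h⟩ else w i) • X i =
      ∑ i : {i // i ∉ A}, w i • X i + Fintype.linearCombination ℝ (fun i : A => X i) u := by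
  rw [← Fintype.sum_subtype_add_sum_subtype (· ∈ A), add_comm, Fintype.linearCombination_apply]
  congr 1 <;> refine Finset.sum_congr rfl fun i _ => ?_
  · rw [dif_neg i.2]
  · rw [dif_pos i.2]

variable [TopologicalSpace V] [IsTopologicalAddGroup V] [ContinuousSMul ℝ V] [T2Space V]
  [FiniteDimensional ℝ V]

theorem sum_smul_mem_interior_zonotope {X : ι → V} {v : ι → ℝ} {A : Set ι}
    (hv : ∀ i, v i ∈ Icc (0 : ℝ) 1) (hA : ∀ i ∈ A, v i ∈ Ioo (0 : ℝ) 1)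
    (hspan : Submodule.span ℝ (X '' A) = ⊤) :
    ∑ i, v i • X i ∈ interior (zonotope X) := by
  classical
  set L := Fintype.linearCombination ℝ (fun i : A => X i)
  set c := ∑ i : {i // i ∉ A}, v i • X i
  let extend (u : A → ℝ) : ι → ℝ := fun i => if h : i ∈ A then u ⟨i, h⟩ else v i
  have hL : IsOpenMap L := by
    refine L.isOpenMap_of_finiteDimensional ?_
    rwa [← span_range_eq_top_iff_surjective_fintypeLinearCombination, ← image_eq_range]
  let U : Set (A → ℝ) := univ.pi fun _ => Ioo 0 1
  have hU : IsOpen U := isOpen_set_pi finite_univ fun _ _ => isOpen_Ioo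
  have hvU : (fun i : A => v i) ∈ U := fun i _ => hA i i.2
  have hsub : (c + L ·) '' U ⊆ zonotope X := by
    rintro _ ⟨u, hu, rfl⟩
    refine ⟨extend u, fun i => ?_, (sum_dite_smul_eq_add_linearCombination X u v).symm⟩
    by_cases hi : i ∈ A
    · simpa [extend, hi] using Ioo_subset_Icc_self (hu ⟨i, hi⟩ trivial)
    · simpa [extend, hi] using hv i
  refine mem_interior.2 ⟨_, hsub, (isOpenMap_add_left c).comp hL U hU, ⟨_, hvU, ?_⟩⟩
  simpa [extend] using (sum_dite_smul_eq_add_linearCombination X (fun i : A => v i) v).symm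

end

theorem boundary_point_of_zonotope_general
    {s : ℕ} {ι : Type*} [Fintype ι] (X : ι → (Fin s → ℝ))
    (v : ι → ℝ) (hv : ∀ i, v i ∈ Set.Icc (0 : ℝ) 1)
    (hb : (∑ i, v i • X i) ∈ frontier {x : Fin s → ℝ |
        ∃ t : ι → ℝ, (∀ i, t i ∈ Set.Icc (0 : ℝ) 1) ∧ x = ∑ i, t i • X i}) :
    Submodule.span ℝ (X '' {i | 0 < v i ∧ v i < 1}) ≠ ⊤ :=
  fun hspan => hb.2 (sum_smul_mem_interior_zonotope hv (fun _ hi => hi) hspan)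

/-- if `v = Σ v_a a` (with `0 ≤ v_a ≤ 1`) lies on the boundary of the
zonotope `B(X)`, then `A = {a ∈ X : 0 < v_a < 1}` does not span `V`. -/
theorem boundary_point_of_zonotope
    {s : ℕ} {ι : Type*} [Fintype ι] (X : ι → (Fin s → ℝ))
    (hspan : Submodule.span ℝ (Set.range X) = ⊤)
    (v : ι → ℝ) (hv : ∀ i, v i ∈ Set.Icc (0 : ℝ) 1)
    (hb : (∑ i, v i • X i) ∈ frontier {x : Fin s → ℝ |
        ∃ t : ι → ℝ, (∀ i, t i ∈ Set.Icc (0 : ℝ) 1) ∧ x = ∑ i, t i • X i}) :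
    Submodule.span ℝ (X '' {i | 0 < v i ∧ v i < 1}) ≠ ⊤ :=
  boundary_point_of_zonotope_general X v hv hb
end

section
/- Let X be a finite list of vectors in a lattice Λ ≅ ℤ^s spanning ℝ^s. If x_0 is a regular point (i.e., for no λ ∈ Λ does x_0 + λ lie in a facet of any parallelepiped of the paving), then the translated zonotope B(X) − x_0 contains exactly δ(X) = Σ_{b∈B(X)} |det(b)| lattice points, given the paving of B(X) by parallelepipeds Π_λ(b) indexed by bases b extracted from X. -/
/-!
Every lattice point of `B(X) - x₀` lies in the interior of exactly one tile `Π_{λ(b)}(b)`.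
For a regular `x₀` this is the same as lying in the half-open tile
`λ(b) + {Σ tᵢ bᵢ : 0 ≤ tᵢ < 1}`: a lattice point on the boundary of a tile would, by regularity,
lie in the interior of another tile, which cannot meet the tile, the closure of its own interior.
The half-open tile is a translate of a fundamental domain of the sublattice `Λ_b` spanned by `b`,
so it contains exactly one point of each coset of `Λ / Λ_b`, that is `[Λ : Λ_b] = |det b|` points.
Summing over the tiles gives `δ(X)`.
-/

open scoped Classical

/-- The zonotope `B(X) = {Σ t_a a : 0 ≤ t_a ≤ 1}`. -/
def Zono {s : ℕ} {ι : Type*} [Fintype ι] (X : ι → (Fin s → ℤ)) : Set (Fin s → ℝ) :=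
  {x | ∃ t : ι → ℝ, (∀ i, t i ∈ Set.Icc (0 : ℝ) 1) ∧ x = ∑ i, t i • XRe X i}

/-- The parallelepiped `Π_λ(b) = {λ + Σ_{i∈b} t_i a_i : 0 ≤ t_i ≤ 1}`. -/
def Para {s : ℕ} {ι : Type*} (X : ι → (Fin s → ℤ)) (lam : Fin s → ℤ) (b : Finset ι) :
    Set (Fin s → ℝ) :=
  {x | ∃ t : ι → ℝ, (∀ i, t i ∈ Set.Icc (0 : ℝ) 1) ∧
    x = (fun j => (lam j : ℝ)) + ∑ i ∈ b, t i • XRe X i}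

open Set Submodule ZSpan

noncomputable section

def intCastLinearMap (s : ℕ) : (Fin s → ℤ) →ₗ[ℤ] (Fin s → ℝ) :=
  (Int.castAddHom ℝ).toIntLinearMap.compLeft (Fin s)

lemma intCastLinearMap_apply {s : ℕ} (z : Fin s → ℤ) :
    intCastLinearMap s z = fun j => (z j : ℝ) := rfl

lemma intCastLinearMap_injective (s : ℕ) : Function.Injective (intCastLinearMap s) :=
  Int.cast_injective.comp_left

def latticePoints {s : ℕ} (S : Set (Fin s → ℝ)) (c : Fin s → ℝ) : Set (Fin s → ℤ) :=
  (fun z => intCastLinearMap s z + c) ⁻¹' S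

@[simp]
lemma mem_latticePoints {s : ℕ} {S : Set (Fin s → ℝ)} {c : Fin s → ℝ} {z : Fin s → ℤ} :
    z ∈ latticePoints S c ↔ intCastLinearMap s z + c ∈ S := Iff.rfl

lemma notMem_interior_of_disjoint_interior {α : Type*} [TopologicalSpace α] {P Q : Set α}
    {x : α} (hP : closure (interior P) = P) (hPQ : interior P ∩ interior Q = ∅) (hx : x ∈ P) :
    x ∉ interior Q := fun hxQ =>
  have hd := (disjoint_iff_inter_eq_empty.2 hPQ).symm.closure_right isOpen_interior
  (hP ▸ hd).ne_of_mem hxQ hx rfl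

namespace IsBasisOf

variable {s : ℕ} {ι : Type*} {X : ι → (Fin s → ℤ)} {b : Finset ι}

def basis (hb : IsBasisOf X b) : Module.Basis b ℝ (Fin s → ℝ) :=
  .mk hb.1 (by rw [← hb.2, image_eq_range]; exact le_rfl)

@[simp]
lemma basis_apply (hb : IsBasisOf X b) (i : b) : hb.basis i = XRe X i := by
  simp [basis]

lemma span_range_basis (hb : IsBasisOf X b) :
    span ℤ (range hb.basis) = (span ℤ (X '' b)).map (intCastLinearMap s) := by
  rw [map_span, image_image, image_eq_range]
  exact congrArg (span ℤ ∘ range) (funext hb.basis_apply)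

lemma intCast_mem_span_range_basis_iff (hb : IsBasisOf X b) (w : Fin s → ℤ) :
    intCastLinearMap s w ∈ span ℤ (range hb.basis) ↔ w ∈ span ℤ (X '' b) := by
  rw [span_range_basis, ← SetLike.mem_coe, map_coe,
    (intCastLinearMap_injective s).mem_set_image, SetLike.mem_coe]

lemma finite_quotient (hb : IsBasisOf X b) : Finite ((Fin s → ℤ) ⧸ span ℤ (X '' b)) := by
  have hli : LinearIndependent ℤ (fun i : b => X i) :=
    .of_comp (intCastLinearMap s) (hb.1.restrict_scalars' ℤ)
  apply finiteQuotientOfFreeOfRankEq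
  calc Module.finrank ℤ (span ℤ (X '' b)) = Fintype.card b := by
        rw [image_eq_range]; exact finrank_span_eq_card hli
    _ = Module.finrank ℤ (Fin s → ℤ) := by
        rw [← Module.finrank_eq_card_basis hb.basis, Module.finrank_fin_fun,
          Module.finrank_fin_fun]

def latticePointsEquivQuotient (hb : IsBasisOf X b) (c : Fin s → ℝ) :
    latticePoints (fundamentalDomain hb.basis) c ≃
      (Fin s → ℤ) ⧸ span ℤ (X '' b) := by
  refine .ofBijective (fun z => Submodule.Quotient.mk z.1) ⟨?_, fun q => ?_⟩
  · rintro ⟨z, hz⟩ ⟨z', hz'⟩ h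
    have hfract : fract hb.basis (intCastLinearMap s z + c) =
        fract hb.basis (intCastLinearMap s z' + c) := by
      rw [fract_eq_fract, neg_add_eq_sub, add_sub_add_right_eq_sub, ← map_sub,
        hb.intCast_mem_span_range_basis_iff, ← neg_sub, neg_mem_iff]
      exact (Submodule.Quotient.eq _).1 h
    rw [fract_eq_self.2 hz, fract_eq_self.2 hz'] at hfract
    exact Subtype.ext (intCastLinearMap_injective s (add_right_cancel hfract))
  · obtain ⟨u, rfl⟩ := Submodule.Quotient.mk_surjective _ q
    obtain ⟨m, hm, hfloor⟩ : ∃ m ∈ span ℤ (X '' b),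
        intCastLinearMap s m = floor hb.basis (intCastLinearMap s u + c) := by
      simpa only [hb.span_range_basis, mem_map] using (floor hb.basis (intCastLinearMap s u + c)).2
    refine ⟨⟨u - m, ?_⟩, (Submodule.Quotient.eq _).2 (by simpa using hm)⟩
    rw [mem_latticePoints, map_sub, hfloor, sub_add_eq_add_sub, ← fract_apply]
    exact fract_mem_fundamentalDomain _ _

lemma finite_latticePoints_fundamentalDomain (hb : IsBasisOf X b) (c : Fin s → ℝ) :
    (latticePoints (fundamentalDomain hb.basis) c).Finite :=
  have := hb.finite_quotient
  Finite.of_equiv _ (hb.latticePointsEquivQuotient c).symm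

lemma ncard_latticePoints_fundamentalDomain (hb : IsBasisOf X b) (c : Fin s → ℝ) :
    (latticePoints (fundamentalDomain hb.basis) c).ncard = detIndex X b := by
  rw [← Nat.card_coe_set_eq]
  exact Nat.card_congr (hb.latticePointsEquivQuotient c)

lemma sum_smul_eq_equivFun_symm (hb : IsBasisOf X b) (t : ι → ℝ) :
    ∑ i ∈ b, t i • XRe X i = hb.basis.equivFun.symm (fun i => t i) := by
  rw [Module.Basis.equivFun_symm_apply, ← Finset.sum_coe_sort b]
  simp only [basis_apply]

def paraCoords (hb : IsBasisOf X b) (l : Fin s → ℤ) : (Fin s → ℝ) ≃ₜ (b → ℝ) :=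
  (Homeomorph.subRight (intCastLinearMap s l)).trans
    hb.basis.equivFun.toContinuousLinearEquiv.toHomeomorph

lemma paraCoords_apply (hb : IsBasisOf X b) (l : Fin s → ℤ) (x : Fin s → ℝ) :
    hb.paraCoords l x = hb.basis.equivFun (x - intCastLinearMap s l) := rfl

lemma para_eq_preimage (hb : IsBasisOf X b) (l : Fin s → ℤ) :
    Para X l b = hb.paraCoords l ⁻¹' univ.pi fun _ => Icc 0 1 := by
  ext x
  simp only [Para, sum_smul_eq_equivFun_symm hb, ← intCastLinearMap_apply, mem_preimage,
    mem_univ_pi]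
  constructor
  · rintro ⟨t, ht, rfl⟩ i
    rw [paraCoords_apply, add_sub_cancel_left, LinearEquiv.apply_symm_apply]
    exact ht i
  · intro hx
    refine ⟨fun i => if h : i ∈ b then hb.paraCoords l x ⟨i, h⟩ else 0, fun i => ?_, ?_⟩
    · dsimp only
      split_ifs
      exacts [hx _, left_mem_Icc.2 zero_le_one]
    · have : (fun i : b => if h : (i : ι) ∈ b then hb.paraCoords l x ⟨i, h⟩ else 0) =
          hb.paraCoords l x := by
        funext i
        simp
      rw [this, paraCoords_apply, LinearEquiv.symm_apply_apply, add_sub_cancel]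

lemma interior_para (hb : IsBasisOf X b) (l : Fin s → ℤ) :
    interior (Para X l b) = hb.paraCoords l ⁻¹' univ.pi fun _ => Ioo 0 1 := by
  rw [para_eq_preimage hb, ← Homeomorph.preimage_interior, interior_pi_set finite_univ]
  simp only [interior_Icc]

lemma closure_interior_para (hb : IsBasisOf X b) (l : Fin s → ℤ) :
    closure (interior (Para X l b)) = Para X l b := by
  rw [interior_para hb, ← Homeomorph.preimage_closure, closure_pi_set, para_eq_preimage hb]
  simp only [closure_Ioo zero_ne_one]

lemma sub_mem_fundamentalDomain_iff (hb : IsBasisOf X b) (l : Fin s → ℤ) (x : Fin s → ℝ) :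
    x - intCastLinearMap s l ∈ fundamentalDomain hb.basis ↔
      hb.paraCoords l x ∈ univ.pi fun _ => Ico 0 1 := by
  simp [paraCoords_apply]

lemma latticePoints_interior_para_eq (hb : IsBasisOf X b) {lam : Finset ι → (Fin s → ℤ)}
    (hdisj : ∀ b b' : Finset ι, IsBasisOf X b → IsBasisOf X b' → b ≠ b' →
      interior (Para X (lam b) b) ∩ interior (Para X (lam b') b') = ∅)
    {x₀ : Fin s → ℝ}
    (hreg : ∀ z : Fin s → ℤ, intCastLinearMap s z + x₀ ∈ Para X (lam b) b →
      ∃ b', IsBasisOf X b' ∧ intCastLinearMap s z + x₀ ∈ interior (Para X (lam b') b')) :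
    latticePoints (interior (Para X (lam b) b)) x₀ =
      latticePoints (fundamentalDomain hb.basis) (x₀ - intCastLinearMap s (lam b)) := by
  ext z
  simp only [mem_latticePoints, ← add_sub_assoc, hb.sub_mem_fundamentalDomain_iff]
  constructor
  · rw [hb.interior_para]
    exact fun h i _ => Ioo_subset_Ico_self (h i trivial)
  · intro h
    have hpara : intCastLinearMap s z + x₀ ∈ Para X (lam b) b := by
      rw [hb.para_eq_preimage]
      exact fun i _ => Ico_subset_Icc_self (h i trivial)
    obtain ⟨b', hb', hz⟩ := hreg z hpara
    obtain rfl | hne := eq_or_ne b' b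
    · exact hz
    · exact absurd hz <| notMem_interior_of_disjoint_interior (hb.closure_interior_para _)
        (hdisj b b' hb hb' hne.symm) hpara

end IsBasisOf

end

theorem lattice_points_of_shifted_zonotope_general
    {s : ℕ} {ι : Type*} [Fintype ι] (X : ι → (Fin s → ℤ))
    (lam : Finset ι → (Fin s → ℤ))
    (hcover : Zono X = ⋃ b ∈ {b : Finset ι | IsBasisOf X b}, Para X (lam b) b)
    (hdisj : ∀ b b' : Finset ι, IsBasisOf X b → IsBasisOf X b' → b ≠ b' →
      interior (Para X (lam b) b) ∩ interior (Para X (lam b') b') = ∅)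
    (x₀ : Fin s → ℝ)
    (hreg : ∀ z : Fin s → ℤ, ((fun j => (z j : ℝ)) + x₀) ∈ Zono X →
      ∃ b : Finset ι, IsBasisOf X b ∧
        ((fun j => (z j : ℝ)) + x₀) ∈ interior (Para X (lam b) b)) :
    Nat.card {z : Fin s → ℤ // ((fun j => (z j : ℝ)) + x₀) ∈ Zono X} =
      ∑ b ∈ Finset.univ.powerset.filter (IsBasisOf X), detIndex X b := by
  set F := Finset.univ.powerset.filter (IsBasisOf X)
  have mem_F {b : Finset ι} : b ∈ F ↔ IsBasisOf X b := by simp [F]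
  have para_subset (b : Finset ι) (hb : IsBasisOf X b) : Para X (lam b) b ⊆ Zono X :=
    hcover ▸ subset_biUnion_of_mem (u := fun b => Para X (lam b) b) hb
  have interior_eq (b : Finset ι) (hb : IsBasisOf X b) :=
    hb.latticePoints_interior_para_eq hdisj fun z hz => hreg z (para_subset b hb hz)
  have zono_eq : latticePoints (Zono X) x₀ =
      ⋃ b ∈ (F : Set (Finset ι)), latticePoints (interior (Para X (lam b) b)) x₀ := by
    ext z
    simp only [mem_latticePoints, mem_iUnion, Finset.mem_coe, mem_F, exists_prop]
    exact ⟨hreg z, fun ⟨b, hb, hz⟩ => para_subset b hb (interior_subset hz)⟩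
  have interior_finite (b : Finset ι) (hb : b ∈ F) :
      (latticePoints (interior (Para X (lam b) b)) x₀).Finite :=
    interior_eq b (mem_F.1 hb) ▸ IsBasisOf.finite_latticePoints_fundamentalDomain _ _
  have interior_disjoint : (F : Set (Finset ι)).PairwiseDisjoint
      fun b => latticePoints (interior (Para X (lam b) b)) x₀ := fun b hb b' hb' hne =>
    (disjoint_iff_inter_eq_empty.2 (hdisj b b' (mem_F.1 hb) (mem_F.1 hb') hne)).preimage _
  calc Nat.card {z : Fin s → ℤ // ((fun j => (z j : ℝ)) + x₀) ∈ Zono X}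
      = (latticePoints (Zono X) x₀).ncard := Nat.card_coe_set_eq _
    _ = ∑ b ∈ F, (latticePoints (interior (Para X (lam b) b)) x₀).ncard := by
      rw [zono_eq, Finite.ncard_biUnion F.finite_toSet interior_finite interior_disjoint,
        finsum_mem_coe_finset]
    _ = ∑ b ∈ F, detIndex X b := Finset.sum_congr rfl fun b hb => by
      rw [interior_eq b (mem_F.1 hb), IsBasisOf.ncard_latticePoints_fundamentalDomain]

/-- given a paving of the zonotope `B(X)` by parallelepipeds
`Π_{λ(b)}(b)` indexed by the bases `b` extracted from `X`, and a regular point `x₀`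
(i.e. all lattice points of `B(X) − x₀` lie in interiors of the translated
parallelepipeds), `B(X) − x₀` contains exactly `δ(X) = Σ_b |det b|` lattice points. -/
theorem lattice_points_of_shifted_zonotope
    {s : ℕ} {ι : Type*} [Fintype ι] (X : ι → (Fin s → ℤ))
    (hX0 : ∀ i, X i ≠ 0)
    (hspan : Submodule.span ℝ (Set.range (XRe X)) = ⊤)
    (lam : Finset ι → (Fin s → ℤ))
    (hcover : Zono X = ⋃ b ∈ {b : Finset ι | IsBasisOf X b}, Para X (lam b) b)
    (hdisj : ∀ b b' : Finset ι, IsBasisOf X b → IsBasisOf X b' → b ≠ b' →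
      interior (Para X (lam b) b) ∩ interior (Para X (lam b') b') = ∅)
    (x₀ : Fin s → ℝ)
    (hreg : ∀ z : Fin s → ℤ, ((fun j => (z j : ℝ)) + x₀) ∈ Zono X →
      ∃ b : Finset ι, IsBasisOf X b ∧
        ((fun j => (z j : ℝ)) + x₀) ∈ interior (Para X (lam b) b)) :
    Nat.card {z : Fin s → ℤ // ((fun j => (z j : ℝ)) + x₀) ∈ Zono X} =
      ∑ b ∈ Finset.univ.powerset.filter (IsBasisOf X), detIndex X b :=
  lattice_points_of_shifted_zonotope_general X lam hcover hdisj x₀ hreg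
end

section
/- Let S be a family of irreducible complete subsets of X. Every complete set A ⊆ X decomposes uniquely (up to order) as A = A_1 ∪ ... ∪ A_k where each A_i is irreducible and span(A) = span(A_1) ⊕ ... ⊕ span(A_k). -/
/-- The span of the sublist `A ⊆ X`. -/
def spanOf (K : Type*) {V ι : Type*} [Field K] [AddCommGroup V] [Module K V]
    (X : ι → V) (A : Set ι) : Submodule K V :=
  Submodule.span K (X '' A)

/-- `A` is complete: `A = X ∩ span(A)`. -/
def IsCompleteSub (K : Type*) {V ι : Type*} [Field K] [AddCommGroup V] [Module K V]
    (X : ι → V) (A : Set ι) : Prop :=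
  A = {i | X i ∈ spanOf K X A}

/-- A decomposition `A = A₁ ∪ A₂` into nonempty parts with
`span(A) = span(A₁) ⊕ span(A₂)`. -/
def IsDecomp (K : Type*) {V ι : Type*} [Field K] [AddCommGroup V] [Module K V]
    (X : ι → V) (A A₁ A₂ : Set ι) : Prop :=
  A₁.Nonempty ∧ A₂.Nonempty ∧ Disjoint A₁ A₂ ∧ A₁ ∪ A₂ = A ∧
    Disjoint (spanOf K X A₁) (spanOf K X A₂) ∧
    spanOf K X A₁ ⊔ spanOf K X A₂ = spanOf K X A

/-- `A` is irreducible: complete, nonempty, and with no nontrivial decomposition. -/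
def IsIrred (K : Type*) {V ι : Type*} [Field K] [AddCommGroup V] [Module K V]
    (X : ι → V) (A : Set ι) : Prop :=
  IsCompleteSub K X A ∧ A.Nonempty ∧ ¬ ∃ A₁ A₂, IsDecomp K X A A₁ A₂

section Aux

variable {V ι : Type*} [AddCommGroup V] [Module ℂ V]

lemma spanOf_union (X : ι → V) (A B : Set ι) :
    spanOf ℂ X (A ∪ B) = spanOf ℂ X A ⊔ spanOf ℂ X B := by
  simp [spanOf, Set.image_union, Submodule.span_union]

lemma spanOf_mono (X : ι → V) {A B : Set ι} (h : A ⊆ B) :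
    spanOf ℂ X A ≤ spanOf ℂ X B :=
  Submodule.span_mono (Set.image_mono h)

lemma mem_spanOf (X : ι → V) {A : Set ι} {i : ι} (h : i ∈ A) : X i ∈ spanOf ℂ X A :=
  Submodule.subset_span ⟨i, h, rfl⟩

lemma spanOf_empty (X : ι → V) : spanOf ℂ X (∅ : Set ι) = ⊥ := by
  simp [spanOf]

lemma spanOf_sUnion (X : ι → V) (Q : Set (Set ι)) :
    spanOf ℂ X (⋃₀ Q) = ⨆ C ∈ Q, spanOf ℂ X C := by
  simp [spanOf, Set.sUnion_eq_biUnion, Set.image_iUnion₂, Submodule.span_iUnion₂]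

lemma disjoint_sup_helper {U W S : Submodule ℂ V} (hUW : Disjoint U W)
    (hS : Disjoint (U ⊔ W) S) : Disjoint U (W ⊔ S) := by
  rw [Submodule.disjoint_def] at hUW hS ⊢
  intro x hxU hx
  rcases Submodule.mem_sup.mp hx with ⟨w, hw, s, hs, hmk⟩
  have hsel : s ∈ U ⊔ W := by
    have : s = x - w := by rw [← hmk]; abel
    rw [this]
    exact sub_mem (Submodule.mem_sup_left hxU) (Submodule.mem_sup_right hw)
  have hs0 : s = 0 := hS s hsel hs
  have : x = w := by rw [← hmk, hs0, add_zero]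
  exact hUW x hxU (this ▸ hw)

lemma IsDecomp.symm' {X : ι → V} {A A₁ A₂ : Set ι} (hd : IsDecomp ℂ X A A₁ A₂) :
    IsDecomp ℂ X A A₂ A₁ := by
  obtain ⟨h1, h2, h3, h4, h5, h6⟩ := hd
  exact ⟨h2, h1, h3.symm, by rw [Set.union_comm]; exact h4, h5.symm,
    by rw [sup_comm]; exact h6⟩

lemma decomp_complete {X : ι → V} (hX0 : ∀ i, X i ≠ 0) {A A₁ A₂ : Set ι}
    (hA : IsCompleteSub ℂ X A) (hd : IsDecomp ℂ X A A₁ A₂) : IsCompleteSub ℂ X A₁ := by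
  obtain ⟨_, _, hdis, hun, hsd, hsup⟩ := hd
  apply Set.Subset.antisymm
  · intro i hi; exact mem_spanOf X hi
  · intro i hi
    have hle : spanOf ℂ X A₁ ≤ spanOf ℂ X A := hsup ▸ le_sup_left
    have hiA : i ∈ A := by rw [hA]; exact hle hi
    rw [← hun] at hiA
    rcases hiA with h | h
    · exact h
    · exact absurd (hsd.le_bot ⟨hi, mem_spanOf X h⟩) (by simpa using hX0 i)

/-- The property of being a good partition into irreducibles. -/
def GoodPart (X : ι → V) (A : Set ι) (P : Set (Set ι)) : Prop :=
  (∀ B ∈ P, B ⊆ A ∧ IsIrred ℂ X B) ∧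
  ⋃₀ P = A ∧
  (∀ B ∈ P, Disjoint (spanOf ℂ X B) (⨆ C ∈ P \ {B}, spanOf ℂ X C)) ∧
  (⨆ B ∈ P, spanOf ℂ X B) = spanOf ℂ X A

end Aux

section Exist

variable {V ι : Type*} [AddCommGroup V] [Module ℂ V]

lemma key_disjoint (X : ι → V) {P₁ P₂ : Set (Set ι)} {A₁ A₂ : Set ι}
    (hm1 : ∀ B ∈ P₁, B ⊆ A₁) (hu2 : ⋃₀ P₂ = A₂)
    (hd1 : ∀ B ∈ P₁, Disjoint (spanOf ℂ X B) (⨆ C ∈ P₁ \ {B}, spanOf ℂ X C))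
    (hAd : Disjoint (spanOf ℂ X A₁) (spanOf ℂ X A₂))
    {B : Set ι} (hB : B ∈ P₁) (hBn : B ∉ P₂) :
    Disjoint (spanOf ℂ X B) (⨆ C ∈ (P₁ ∪ P₂) \ {B}, spanOf ℂ X C) := by
  have heq : (P₁ ∪ P₂) \ {B} = (P₁ \ {B}) ∪ P₂ := by
    rw [Set.union_diff_distrib, Set.diff_singleton_eq_self hBn]
  rw [heq, ← spanOf_sUnion, Set.sUnion_union, spanOf_union, hu2]
  have hUW : Disjoint (spanOf ℂ X B) (spanOf ℂ X (⋃₀ (P₁ \ {B}))) := by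
    rw [spanOf_sUnion]; exact hd1 B hB
  have hsup1 : spanOf ℂ X B ⊔ spanOf ℂ X (⋃₀ (P₁ \ {B})) ≤ spanOf ℂ X A₁ := by
    apply sup_le (spanOf_mono X (hm1 B hB))
    apply spanOf_mono X
    intro i hi
    obtain ⟨C, hC, hiC⟩ := hi
    exact hm1 C hC.1 hiC
  exact disjoint_sup_helper hUW (hAd.mono_left hsup1)

lemma exists_goodPart [Fintype ι] (X : ι → V) (hX0 : ∀ i, X i ≠ 0) :
    ∀ n (A : Set ι), A.ncard = n → IsCompleteSub ℂ X A → ∃ P, GoodPart X A P := by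
  intro n
  induction n using Nat.strong_induction_on with
  | _ n IH =>
    intro A hn hA
    rcases Set.eq_empty_or_nonempty A with rfl | hne
    · refine ⟨∅, ?_, ?_, ?_, ?_⟩ <;> simp [spanOf_empty]
    by_cases hdec : ∃ A₁ A₂, IsDecomp ℂ X A A₁ A₂
    · obtain ⟨A₁, A₂, hd⟩ := hdec
      obtain ⟨hne1, hne2, hdis, hun, hsd, hsup⟩ := hd
      have hc1 : IsCompleteSub ℂ X A₁ := decomp_complete hX0 hA ⟨hne1, hne2, hdis, hun, hsd, hsup⟩
      have hc2 : IsCompleteSub ℂ X A₂ :=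
        decomp_complete hX0 hA (IsDecomp.symm' ⟨hne1, hne2, hdis, hun, hsd, hsup⟩)
      have hsub1 : A₁ ⊆ A := hun ▸ Set.subset_union_left
      have hsub2 : A₂ ⊆ A := hun ▸ Set.subset_union_right
      have hss1 : A₁ ⊂ A := by
        refine ⟨hsub1, fun hAA => ?_⟩
        obtain ⟨i, hi⟩ := hne2
        exact absurd (hdis.le_bot ⟨hAA (hsub2 hi), hi⟩) (by simp)
      have hss2 : A₂ ⊂ A := by
        refine ⟨hsub2, fun hAA => ?_⟩
        obtain ⟨i, hi⟩ := hne1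
        exact absurd (hdis.le_bot ⟨hi, hAA (hsub1 hi)⟩) (by simp)
      have hlt1 : A₁.ncard < n := hn ▸ Set.ncard_lt_ncard hss1 A.toFinite
      have hlt2 : A₂.ncard < n := hn ▸ Set.ncard_lt_ncard hss2 A.toFinite
      obtain ⟨P₁, hP₁mem, hP₁un, hP₁dis, hP₁sup⟩ := IH _ hlt1 A₁ rfl hc1
      obtain ⟨P₂, hP₂mem, hP₂un, hP₂dis, hP₂sup⟩ := IH _ hlt2 A₂ rfl hc2
      have hnotin : ∀ B, B ∈ P₁ → B ∉ P₂ := by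
        intro B hB1 hB2
        obtain ⟨i, hi⟩ := (hP₁mem B hB1).2.2.1
        exact absurd (hdis.le_bot ⟨(hP₁mem B hB1).1 hi, (hP₂mem B hB2).1 hi⟩) (by simp)
      refine ⟨P₁ ∪ P₂, ?_, ?_, ?_, ?_⟩
      · rintro B (hB | hB)
        · exact ⟨(hP₁mem B hB).1.trans hsub1, (hP₁mem B hB).2⟩
        · exact ⟨(hP₂mem B hB).1.trans hsub2, (hP₂mem B hB).2⟩
      · rw [Set.sUnion_union, hP₁un, hP₂un, hun]
      · rintro B (hB | hB)
        · exact key_disjoint X (fun C hC => (hP₁mem C hC).1) hP₂un hP₁dis hsd hB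
            (hnotin B hB)
        · rw [Set.union_comm]
          exact key_disjoint X (fun C hC => (hP₂mem C hC).1) hP₁un hP₂dis hsd.symm hB
            (fun h => hnotin B h hB)
      · rw [iSup_union, hP₁sup, hP₂sup, ← hsup]
    · refine ⟨{A}, ?_, ?_, ?_, ?_⟩
      · rintro B hB
        rw [Set.mem_singleton_iff] at hB
        subst hB
        exact ⟨subset_rfl, hA, hne, hdec⟩
      · simp
      · rintro B hB
        rw [Set.mem_singleton_iff] at hB
        subst hB
        simp
      · simp

end Exist

section Uniq

variable {V ι : Type*} [AddCommGroup V] [Module ℂ V]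

/-- Members of a good partition are "maximal-detecting": if `B ⊆ B'` are both in `P`, then
`B = B'`. -/
lemma goodPart_eq_of_subset (X : ι → V) (hX0 : ∀ i, X i ≠ 0) {A : Set ι} {P : Set (Set ι)}
    (hP : GoodPart X A P) {B B' : Set ι} (hB : B ∈ P) (hB' : B' ∈ P) (hss : B ⊆ B') :
    B = B' := by
  by_contra hne
  obtain ⟨i, hi⟩ := (hP.1 B hB).2.2.1
  have h1 : X i ∈ spanOf ℂ X B' := mem_spanOf X (hss hi)
  have h2 : X i ∈ ⨆ C ∈ P \ {B'}, spanOf ℂ X C := by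
    have : spanOf ℂ X B ≤ ⨆ C ∈ P \ {B'}, spanOf ℂ X C :=
      le_biSup _ (⟨hB, hne⟩ : B ∈ P \ {B'})
    exact this (mem_spanOf X hi)
  exact hX0 i ((hP.2.2.1 B' hB').le_bot ⟨h1, h2⟩)

/-- An irreducible subset of `A` is contained in some member of a good partition. -/
lemma irred_subset_of_goodPart (X : ι → V) {A : Set ι} {Q : Set (Set ι)}
    (hQ : GoodPart X A Q) {B : Set ι} (hBA : B ⊆ A) (hirr : IsIrred ℂ X B) :
    ∃ C ∈ Q, B ⊆ C := by
  obtain ⟨hcomp, hBne, hnodec⟩ := hirr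
  obtain ⟨i₀, hi₀⟩ := hBne
  have hi₀A : i₀ ∈ ⋃₀ Q := hQ.2.1 ▸ hBA hi₀
  obtain ⟨C, hC, hi₀C⟩ := hi₀A
  refine ⟨C, hC, ?_⟩
  by_contra hnss
  -- B ∩ C and B \ C give a decomposition of B
  have hne1 : (B ∩ C).Nonempty := ⟨i₀, hi₀, hi₀C⟩
  have hne2 : (B \ C).Nonempty := by
    rw [Set.diff_nonempty]; exact hnss
  have hdisj : Disjoint (B ∩ C) (B \ C) := Set.disjoint_of_subset_left
    Set.inter_subset_right Set.disjoint_sdiff_right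
  have hun : (B ∩ C) ∪ (B \ C) = B := Set.inter_union_diff B C
  have hle1 : spanOf ℂ X (B ∩ C) ≤ spanOf ℂ X C := spanOf_mono X Set.inter_subset_right
  have hle2 : spanOf ℂ X (B \ C) ≤ ⨆ C' ∈ Q \ {C}, spanOf ℂ X C' := by
    rw [← spanOf_sUnion]
    apply spanOf_mono X
    intro i hi
    have hiA : i ∈ ⋃₀ Q := hQ.2.1 ▸ hBA hi.1
    obtain ⟨C', hC', hiC'⟩ := hiA
    refine ⟨C', ⟨hC', ?_⟩, hiC'⟩
    rintro rfl
    exact hi.2 hiC'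
  have hsd : Disjoint (spanOf ℂ X (B ∩ C)) (spanOf ℂ X (B \ C)) :=
    (hQ.2.2.1 C hC).mono hle1 hle2
  have hsup : spanOf ℂ X (B ∩ C) ⊔ spanOf ℂ X (B \ C) = spanOf ℂ X B := by
    rw [← spanOf_union, hun]
  exact hnodec ⟨B ∩ C, B \ C, hne1, hne2, hdisj, hun, hsd, hsup⟩

lemma goodPart_subset (X : ι → V) (hX0 : ∀ i, X i ≠ 0) {A : Set ι} {P Q : Set (Set ι)}
    (hP : GoodPart X A P) (hQ : GoodPart X A Q) : P ⊆ Q := by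
  intro B hB
  obtain ⟨hBA, hBirr⟩ := hP.1 B hB
  obtain ⟨C, hC, hBC⟩ := irred_subset_of_goodPart X hQ hBA hBirr
  obtain ⟨hCA, hCirr⟩ := hQ.1 C hC
  obtain ⟨B', hB', hCB'⟩ := irred_subset_of_goodPart X hP hCA hCirr
  have hBB' : B = B' := goodPart_eq_of_subset X hX0 hP hB hB' (hBC.trans hCB')
  have : B = C := Set.Subset.antisymm hBC (hBB' ▸ hCB')
  exact this ▸ hC

end Uniq

/-- every complete set `A ⊆ X` decomposes uniquely (up to order, i.e.
uniquely as a family of parts) as `A = A₁ ∪ ... ∪ A_k` with each `A_i` irreducible and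
`span(A) = span(A₁) ⊕ ... ⊕ span(A_k)`. -/
theorem decomposition_into_irreducibles
    {V ι : Type*} [AddCommGroup V] [Module ℂ V] [FiniteDimensional ℂ V] [Fintype ι]
    (X : ι → V) (hX0 : ∀ i, X i ≠ 0) (A : Set ι) (hA : IsCompleteSub ℂ X A) :
    ∃! P : Set (Set ι),
      (∀ B ∈ P, B ⊆ A ∧ IsIrred ℂ X B) ∧
      ⋃₀ P = A ∧
      (∀ B ∈ P, Disjoint (spanOf ℂ X B) (⨆ C ∈ P \ {B}, spanOf ℂ X C)) ∧
      (⨆ B ∈ P, spanOf ℂ X B) = spanOf ℂ X A := by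
  obtain ⟨P, hP⟩ := exists_goodPart X hX0 A.ncard A rfl hA
  refine ⟨P, hP, fun Q hQ => Set.Subset.antisymm (goodPart_subset X hX0 hQ hP)
    (goodPart_subset X hX0 hP hQ)⟩
end

section
/- If A = A_1 ∪ A_2 is a decomposition of a complete set A ⊆ X and B ⊆ A is an irreducible complete set, then B ⊆ A_1 or B ⊆ A_2. -/
/-- if `A = A₁ ∪ A₂` is a decomposition of a complete set `A` and
`B ⊆ A` is irreducible, then `B ⊆ A₁` or `B ⊆ A₂`. -/
theorem irreducible_subset_of_decomposition
    {K V ι : Type*} [Field K] [AddCommGroup V] [Module K V] [Fintype ι]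
    (X : ι → V) (hX0 : ∀ i, X i ≠ 0) (A A₁ A₂ B : Set ι)
    (hA : IsCompleteSub K X A) (hdec : IsDecomp K X A A₁ A₂)
    (hBA : B ⊆ A) (hB : IsIrred K X B) :
    B ⊆ A₁ ∨ B ⊆ A₂ := by
  obtain ⟨-, -, hdisj, hunion, hspdisj, -⟩ := hdec
  by_cases h1 : (B ∩ A₁).Nonempty
  · by_cases h2 : (B ∩ A₂).Nonempty
    · exfalso
      apply hB.2.2
      refine ⟨B ∩ A₁, B ∩ A₂, h1, h2,
        hdisj.mono Set.inter_subset_right Set.inter_subset_right, ?_, ?_, ?_⟩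
      · rw [← Set.inter_union_distrib_left, hunion]
        exact Set.inter_eq_left.mpr hBA
      · exact hspdisj.mono
          (Submodule.span_mono (Set.image_mono Set.inter_subset_right))
          (Submodule.span_mono (Set.image_mono Set.inter_subset_right))
      · rw [spanOf, spanOf, spanOf, ← Submodule.span_union, ← Set.image_union,
          ← Set.inter_union_distrib_left, hunion, Set.inter_eq_left.mpr hBA]
    · left
      intro i hi
      rcases (hunion ▸ hBA hi) with h | h
      · exact h
      · exact absurd ⟨i, hi, h⟩ h2
  · right
    intro i hi
    rcases (hunion ▸ hBA hi) with h | h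
    · exact absurd ⟨i, hi, h⟩ h1
    · exact h
end
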